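/- Let N ≥ 2 and let H be an N×N Hermitian complex matrix with Tr H = 1 and ‖H − I/N‖_HS ≤ 1/√(N(N−1)). Then H is positive semidefinite; i.e., the Hilbert–Schmidt ball of radius 1/√(N(N−1)) centered at the maximally mixed state I/N, intersected with the Hermitian trace-one matrices, is contained in the set of density matrices. -/

import Mathlib

/-!
Diagonalise `H = U diag(λ) U*`. The Hilbert–Schmidt condition then says that the real vector
`μ = λ - 1/N`, whose entries sum to zero, has `∑ μᵢ² ≤ 1/(N(N-1))`. Cauchy–Schwarz on the other
`N - 1` coordinates gives `μⱼ² ≤ (N-1)(∑ μᵢ² - μⱼ²)`, i.e. `N μⱼ² ≤ (N-1) ∑ μᵢ² ≤ 1/N`, so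
`|μⱼ| ≤ 1/N` and every eigenvalue `λⱼ = μⱼ + 1/N` is nonnegative.
-/

open Matrix Finset
open scoped ComplexOrder

lemma card_mul_sq_le_of_sum_eq_zero {ι : Type*} [Fintype ι] {μ : ι → ℝ}
    (hμ : ∑ i, μ i = 0) (j : ι) :
    Fintype.card ι * μ j ^ 2 ≤ (Fintype.card ι - 1) * ∑ i, μ i ^ 2 := by
  classical
  have hrest : ∑ i ∈ univ.erase j, μ i = -μ j := by
    linarith [add_sum_erase univ μ (mem_univ j)]
  have hrest_sq : ∑ i ∈ univ.erase j, μ i ^ 2 = ∑ i, μ i ^ 2 - μ j ^ 2 := by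
    linarith [add_sum_erase univ (μ · ^ 2) (mem_univ j)]
  have hCS := sq_sum_le_card_mul_sum_sq (s := univ.erase j) (f := μ)
  rw [hrest, hrest_sq, cast_card_erase_of_mem (mem_univ j), card_univ, neg_sq] at hCS
  linarith

lemma nonneg_of_sum_eq_one_of_sum_sq_sub_inv_card_le {ι : Type*} [Fintype ι] {x : ι → ℝ}
    (hsum : ∑ i, x i = 1)
    (hdist : ∑ i, (x i - (Fintype.card ι : ℝ)⁻¹) ^ 2
      ≤ ((Fintype.card ι : ℝ) * (Fintype.card ι - 1))⁻¹) (j : ι) :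
    0 ≤ x j := by
  set n : ℝ := (Fintype.card ι : ℝ)
  have hn1 : 1 ≤ n := Nat.one_le_cast.mpr (Fintype.card_pos_iff.mpr ⟨j⟩)
  have hn : 0 < n := by linarith
  have hcentered : ∑ i, (x i - n⁻¹) = 0 := by
    rw [sum_sub_distrib, hsum, sum_const, card_univ, nsmul_eq_mul, mul_inv_cancel₀ hn.ne',
      sub_self]
  have hshrink : (n - 1) * (n * (n - 1))⁻¹ ≤ n⁻¹ := by
    rw [mul_inv, mul_left_comm]
    exact mul_le_of_le_one_right (inv_nonneg.mpr hn.le) mul_inv_le_one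
  have hsq : (x j - n⁻¹) ^ 2 ≤ (n⁻¹) ^ 2 := by
    refine le_of_mul_le_mul_left ?_ hn
    calc n * (x j - n⁻¹) ^ 2 ≤ (n - 1) * ∑ i, (x i - n⁻¹) ^ 2 :=
          card_mul_sq_le_of_sum_eq_zero hcentered j
      _ ≤ (n - 1) * (n * (n - 1))⁻¹ := mul_le_mul_of_nonneg_left hdist (by linarith)
      _ ≤ n⁻¹ := hshrink
      _ = n * (n⁻¹) ^ 2 := by field_simp
  linarith [neg_abs_le (x j - n⁻¹), abs_le_of_sq_le_sq hsq (inv_nonneg.mpr hn.le)]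

namespace Matrix.IsHermitian

variable {n 𝕜 : Type*} [Fintype n] [DecidableEq n] [RCLike 𝕜] {A : Matrix n n 𝕜}

lemma trace_cfc (hA : A.IsHermitian) (f : ℝ → ℝ) :
    (cfc f A).trace = ∑ i, (f (hA.eigenvalues i) : 𝕜) := by
  rw [hA.cfc_eq, IsHermitian.cfc, Unitary.conjStarAlgAut_apply, trace_mul_cycle,
    Unitary.coe_star_mul_self, one_mul, trace_diagonal]
  rfl

lemma re_trace_conjTranspose_mul_self_sub_smul_one (hA : A.IsHermitian) (c : ℝ) :
    RCLike.re ((A - (c : 𝕜) • 1)ᴴ * (A - (c : 𝕜) • 1)).trace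
      = ∑ i, (hA.eigenvalues i - c) ^ 2 := by
  have hcfc : cfc (fun x : ℝ => (x - c) ^ 2) A = (A - (c : 𝕜) • 1)ᴴ * (A - (c : 𝕜) • 1) := by
    rw [cfc_pow _ _ A, cfc_sub _ _ A, cfc_id' ℝ A, cfc_const c A, Algebra.algebraMap_eq_smul_one,
      sq, conjTranspose_sub, hA.eq, conjTranspose_smul, conjTranspose_one, RCLike.star_def,
      RCLike.conj_ofReal, RCLike.real_smul_eq_coe_smul (K := 𝕜)]
  rw [← hcfc, hA.trace_cfc, map_sum]
  simp only [RCLike.ofReal_re]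

end Matrix.IsHermitian

theorem hermitian_near_maximally_mixed_posSemidef
    {N : ℕ} (H : Matrix (Fin N) (Fin N) ℂ)
    (hherm : H.IsHermitian) (htr : H.trace = 1)
    (hball : Real.sqrt (((H - (N : ℂ)⁻¹ • 1)ᴴ * (H - (N : ℂ)⁻¹ • 1)).trace.re)
      ≤ 1 / Real.sqrt ((N : ℝ) * (N - 1))) :
    H.PosSemidef := by
  have hsum : ∑ i, hherm.eigenvalues i = 1 := by
    simpa [htr, Complex.re_sum] using congrArg Complex.re hherm.trace_eq_sum_eigenvalues.symm
  have hdist : ∑ i, (hherm.eigenvalues i - (N : ℝ)⁻¹) ^ 2 ≤ ((N : ℝ) * (N - 1))⁻¹ := by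
    have hden : 0 ≤ (N : ℝ) * (N - 1) := by
      rcases N.eq_zero_or_pos with rfl | hpos
      · simp
      · exact mul_nonneg (Nat.cast_nonneg N) (sub_nonneg.mpr (Nat.one_le_cast.mpr hpos))
    rw [one_div, ← Real.sqrt_inv, Real.sqrt_le_sqrt_iff (inv_nonneg.mpr hden)] at hball
    rw [← hherm.re_trace_conjTranspose_mul_self_sub_smul_one]
    simpa using hball
  refine hherm.posSemidef_iff_eigenvalues_nonneg.mpr fun j => ?_
  exact nonneg_of_sum_eq_one_of_sum_sq_sub_inv_card_le hsum (by simpa using hdist) j
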